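/- arXiv:1111.3464 — 5 statements merged into one kernel-verified Lean document; each statement's English description precedes it below -/
import Mathlib

section
/- If two sequences satisfy properties (C2) and (C3) of the p-ASF-1 definition and p(x_n, y_n) ≠ 0 for all n, then liminf_{n→∞} p(x_n, y_n) = 0. -/
open Filter Topology Set

/-- Two sequences are p-ASF-1 (conditions (C1), (C2), (C3)). -/
def ASF1 {X : Type*} (p : X → X → ℝ) (x y : ℕ → X) : Prop :=
  (∀ ε > (0:ℝ), ∃ δ > (0:ℝ), ∀ i, p (x i) (y i) < δ →
    Filter.limsup (fun n => p (x n) (y n)) Filter.atTop ≤ ε) ∧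
  (∀ ε > (0:ℝ), ∃ δ > (0:ℝ), ∀ i, ε < p (x i) (y i) → p (x i) (y i) < ε + δ →
    ∃ ν : ℕ, p (x (ν + i)) (y (ν + i)) ≤ ε) ∧
  (∀ i, p (x i) (y i) ≠ 0 → ∃ ν : ℕ, p (x (ν + i)) (y (ν + i)) < p (x i) (y i))

/-- A sequence is p-ASF-2 (condition (C4)). -/
def ASF2 {X : Type*} (p : X → X → ℝ) (x : ℕ → X) : Prop :=
  ∀ ε > (0:ℝ), ∃ δ > (0:ℝ), ∃ ν : ℕ, ∀ i j, ε < p (x i) (x j) → p (x i) (x j) < ε + δ →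
    p (x (ν + i)) (x (ν + j)) ≤ ε

/-- Condition (C5). -/
def C5 {X : Type*} (p : X → X → ℝ) (x : ℕ → X) : Prop :=
  ∀ i j, p (x i) (x j) ≠ 0 → ∃ ν : ℕ, p (x (ν + i)) (x (ν + j)) < p (x i) (x j)


/-!
Write `f n = p (x n, y n)`, a positive sequence, and let `m N` be the infimum of its tail from `N`.
By (C3) the infimum `m N` is never attained. If `m N > 0`, take the `δ` that (C2) gives for
`ε = m N` and a term of the tail in `(m N, m N + δ)`: (C2) produces a later term `≤ m N`, so the
infimum is attained after all. So every tail infimum is `0`, and `f` comes arbitrarily close to `0` infinitely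
often.
-/

section TailInfimum

variable {f : ℕ → ℝ}

theorem iInf_tail_lt (hbdd : BddBelow (range f)) (hdec : ∀ i, ∃ ν, f (ν + i) < f i)
    (N i : ℕ) : ⨅ j, f (j + N) < f (i + N) := by
  obtain ⟨ν, hν⟩ := hdec (i + N)
  calc ⨅ j, f (j + N) ≤ f (ν + i + N) := ciInf_le (hbdd.mono (range_comp_subset_range _ f)) _
    _ = f (ν + (i + N)) := by rw [Nat.add_assoc]
    _ < f (i + N) := hν

theorem iInf_tail_nonpos (hbdd : BddBelow (range f)) (hdec : ∀ i, ∃ ν, f (ν + i) < f i)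
    (hgap : ∀ ε > (0:ℝ), ∃ δ > (0:ℝ), ∀ i, ε < f i → f i < ε + δ → ∃ ν : ℕ, f (ν + i) ≤ ε)
    (N : ℕ) : ⨅ j, f (j + N) ≤ 0 := by
  set m := ⨅ j, f (j + N)
  by_contra! hm
  obtain ⟨δ, hδ, hgapm⟩ := hgap m hm
  obtain ⟨i, hi⟩ := exists_lt_of_ciInf_lt (show m < m + δ by linarith)
  obtain ⟨ν, hν⟩ := hgapm (i + N) (iInf_tail_lt hbdd hdec N i) hi
  have hlt := iInf_tail_lt hbdd hdec N (ν + i)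
  rw [Nat.add_assoc] at hlt
  exact hν.not_gt hlt

theorem frequently_lt_of_iInf_tail_nonpos (htail : ∀ N, ⨅ j, f (j + N) ≤ 0) {ε : ℝ}
    (hε : 0 < ε) : ∃ᶠ n in atTop, f n < ε := by
  refine frequently_atTop.2 fun N => ?_
  obtain ⟨i, hi⟩ := exists_lt_of_ciInf_lt ((htail N).trans_lt hε)
  exact ⟨i + N, Nat.le_add_left N i, hi⟩

end TailInfimum

theorem Filter.liminf_eq_zero_of_frequently_lt {α : Type*} {l : Filter α} {f : α → ℝ}
    (h0 : ∀ a, 0 ≤ f a) (hfreq : ∀ ε > (0:ℝ), ∃ᶠ a in l, f a < ε) : liminf f l = 0 := by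
  have hbdd : l.IsBoundedUnder (· ≥ ·) f := isBoundedUnder_of ⟨0, h0⟩
  refine le_antisymm (le_of_forall_pos_le_add fun ε hε => ?_) ?_
  · rw [zero_add]
    exact liminf_le_of_frequently_le ((hfreq ε hε).mono fun _ => le_of_lt) hbdd
  · exact le_liminf_of_le (IsCoboundedUnder.of_frequently_le
      ((hfreq 1 one_pos).mono fun _ => le_of_lt)) (Eventually.of_forall h0)

theorem liminf_zero_of_C2_C3 {X : Type*} (p : X → X → ℝ) (hp : ∀ a b, 0 ≤ p a b)
    (x y : ℕ → X)
    (hC2 : ∀ ε > (0:ℝ), ∃ δ > (0:ℝ), ∀ i, ε < p (x i) (y i) → p (x i) (y i) < ε + δ →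
      ∃ ν : ℕ, p (x (ν + i)) (y (ν + i)) ≤ ε)
    (hC3 : ∀ i, p (x i) (y i) ≠ 0 → ∃ ν : ℕ, p (x (ν + i)) (y (ν + i)) < p (x i) (y i))
    (hne : ∀ n, p (x n) (y n) ≠ 0) :
    Filter.liminf (fun n => p (x n) (y n)) Filter.atTop = 0 := by
  set f : ℕ → ℝ := fun n => p (x n) (y n)
  have hbdd : BddBelow (range f) := ⟨0, by rintro _ ⟨n, rfl⟩; exact hp _ _⟩
  have htail := iInf_tail_nonpos hbdd (fun i => hC3 i (hne i)) hC2
  exact liminf_eq_zero_of_frequently_lt (fun n => hp _ _)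
    fun ε hε => frequently_lt_of_iInf_tail_nonpos htail hε
end

section
/- Let {x_n} be a p-ASF-2 sequence where p satisfies the mixed triangle inequalities p(x,y) ≤ p(x,z) + r(z,y) and p(x,y) ≤ r(x,z) + p(z,y) with r satisfying the triangle inequality. If lim_{n→∞} r(x_n, x_{n+1}) = 0 and lim_{n→∞} p(x_n, x_{n+1}) = 0, then lim_{n→∞} sup_{m>n} p(x_n, x_m) = 0. -/
open Filter Topology Set

/-!
Once the steps `r (x a) (x (a+1))` and `p (x a) (x (a+1))` are below `η` from `N` on, the mixed
triangle inequalities let us move either endpoint of `p (x n) (x m)` forward by `s` places at a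
cost of `s * η`. Take (C4) at level `ε / 2` with data `δ, ν`, and `(ν + 1) * η < min δ (ε / 2)`.
By strong induction on `m > n ≥ N`, `p (x n) (x m) ≤ ε / 2 + ν * η`. For `m ≤ n + ν + 1` this is
the cost of walking from `n + 1`. Otherwise, with `j = m - ν - 1`, the induction hypothesis puts
`p (x n) (x (j+1))` below `ε / 2 + δ`: either it is at most `ε / 2` and we walk `ν` more steps to
the right, or (C4) bounds `p (x (ν+n)) (x m)` by `ε / 2` and we walk `ν` steps back on the left.
-/

section Drift

variable {X : Type*} {p r : X → X → ℝ} {x : ℕ → X} {η : ℝ} {N : ℕ}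

theorem p_shift_right_le (hmix1 : ∀ a b c, p a b ≤ p a c + r c b)
    (hr : ∀ a ≥ N, r (x a) (x (a + 1)) ≤ η) (y : X) {j : ℕ} (hj : N ≤ j) (s : ℕ) :
    p y (x (j + s)) ≤ p y (x j) + s * η := by
  induction s with
  | zero => simp
  | succ s ih =>
    calc p y (x (j + (s + 1))) ≤ p y (x (j + s)) + r (x (j + s)) (x (j + s + 1)) := hmix1 _ _ _
      _ ≤ p y (x j) + s * η + η := add_le_add ih (hr _ (by omega))
      _ = p y (x j) + ((s + 1 : ℕ) : ℝ) * η := by push_cast; ring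

theorem p_le_shift_left (hmix2 : ∀ a b c, p a b ≤ r a c + p c b)
    (hr : ∀ a ≥ N, r (x a) (x (a + 1)) ≤ η) (y : X) {i : ℕ} (hi : N ≤ i) (s : ℕ) :
    p (x i) y ≤ s * η + p (x (i + s)) y := by
  induction s with
  | zero => simp
  | succ s ih =>
    calc p (x i) y ≤ s * η + p (x (i + s)) y := ih
      _ ≤ s * η + (r (x (i + s)) (x (i + s + 1)) + p (x (i + s + 1)) y) := by
          gcongr; exact hmix2 _ _ _
      _ ≤ s * η + (η + p (x (i + s + 1)) y) := by gcongr; exact hr _ (by omega)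
      _ = ((s + 1 : ℕ) : ℝ) * η + p (x (i + (s + 1))) y := by
          rw [← Nat.add_assoc]; push_cast; ring

theorem p_le_of_asf2_level (hmix1 : ∀ a b c, p a b ≤ p a c + r c b)
    (hmix2 : ∀ a b c, p a b ≤ r a c + p c b)
    (hr : ∀ a ≥ N, r (x a) (x (a + 1)) ≤ η) (hp : ∀ a ≥ N, p (x a) (x (a + 1)) ≤ η)
    {c δ : ℝ} {ν : ℕ}
    (hc : ∀ i j, c < p (x i) (x j) → p (x i) (x j) < c + δ →
      p (x (ν + i)) (x (ν + j)) ≤ c)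
    (hη : 0 ≤ η) (hηc : η ≤ c) (hηδ : (ν + 1) * η < δ) {n : ℕ} (hn : N ≤ n) :
    ∀ m > n, p (x n) (x m) ≤ c + ν * η := by
  intro m
  induction m using Nat.strong_induction_on with
  | _ m ih =>
  intro hm
  rcases le_or_gt m (n + ν + 1) with hnear | hfar
  · obtain ⟨s, rfl⟩ : ∃ s, m = n + 1 + s := ⟨m - n - 1, by omega⟩
    have hsν : (s : ℝ) ≤ ν := by exact_mod_cast (by omega : s ≤ ν)
    calc p (x n) (x (n + 1 + s)) ≤ p (x n) (x (n + 1)) + s * η :=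
          p_shift_right_le hmix1 hr _ (by omega) s
      _ ≤ η + ν * η := by gcongr; exact hp n hn
      _ ≤ c + ν * η := by linarith
  · obtain ⟨j, rfl⟩ : ∃ j, m = ν + (j + 1) := ⟨m - ν - 1, by omega⟩
    have hj : p (x n) (x j) ≤ c + ν * η := ih j (by omega) (by omega)
    have hj1 : p (x n) (x (j + 1)) ≤ c + (ν + 1) * η := by
      have := p_shift_right_le hmix1 hr (x n) (j := j) (by omega) 1
      push_cast at this; linarith
    by_cases hgt : c < p (x n) (x (j + 1))
    · have hshift := hc n (j + 1) hgt (by linarith)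
      have := p_le_shift_left hmix2 hr (x (ν + (j + 1))) hn ν
      rw [Nat.add_comm n ν] at this
      linarith
    · have := p_shift_right_le hmix1 hr (x n) (j := j + 1) (by omega) ν
      rw [Nat.add_comm (j + 1) ν] at this
      linarith

end Drift

theorem pCauchy_of_ASF2_general {X : Type*} (p r : X → X → ℝ)
    (hmix1 : ∀ a b c, p a b ≤ p a c + r c b)
    (hmix2 : ∀ a b c, p a b ≤ r a c + p c b)
    (x : ℕ → X) (h2 : ASF2 p x)
    (hrlim : Filter.Tendsto (fun n => r (x n) (x (n + 1))) Filter.atTop (nhds 0))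
    (hplim : Filter.Tendsto (fun n => p (x n) (x (n + 1))) Filter.atTop (nhds 0)) :
    ∀ ε > (0:ℝ), ∃ N : ℕ, ∀ n ≥ N, ∀ m > n, p (x n) (x m) < ε := by
  intro ε hε
  obtain ⟨δ, hδ, ν, hc⟩ := h2 (ε / 2) (by positivity)
  obtain ⟨η, hη, hνη⟩ := exists_pos_mul_lt (lt_min hδ (half_pos hε)) ((ν : ℝ) + 1)
  obtain ⟨hνηδ, hνηε⟩ := lt_min_iff.mp hνη
  obtain ⟨N, hN⟩ := eventually_atTop.mp
    ((hrlim.eventually (ge_mem_nhds hη)).and (hplim.eventually (ge_mem_nhds hη)))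
  refine ⟨N, fun n hn m hm => ?_⟩
  have hηε : η ≤ ε / 2 := by nlinarith [(ν.cast_nonneg : (0:ℝ) ≤ ν)]
  have := p_le_of_asf2_level hmix1 hmix2 (fun a ha => (hN a ha).1) (fun a ha => (hN a ha).2)
    hc hη.le hηε hνηδ hn m hm
  linarith

theorem pCauchy_of_ASF2 {X : Type*} (p r : X → X → ℝ)
    (hp : ∀ a b, 0 ≤ p a b) (hr : ∀ a b, 0 ≤ r a b)
    (hmix1 : ∀ a b c, p a b ≤ p a c + r c b)
    (hmix2 : ∀ a b c, p a b ≤ r a c + p c b)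
    (hrtri : ∀ a b c, r a b ≤ r a c + r c b)
    (x : ℕ → X) (h2 : ASF2 p x)
    (hrlim : Filter.Tendsto (fun n => r (x n) (x (n + 1))) Filter.atTop (nhds 0))
    (hplim : Filter.Tendsto (fun n => p (x n) (x (n + 1))) Filter.atTop (nhds 0)) :
    ∀ ε > (0:ℝ), ∃ N : ℕ, ∀ n ≥ N, ∀ m > n, p (x n) (x m) < ε :=
  pCauchy_of_ASF2_general p r hmix1 hmix2 x h2 hrlim hplim
end

section
/- Let (T,S) be an (F,ψ)-contraction and let {x_n} be the alternating iteration sequence (x_{n+1} = Tx_n for n even, x_{n+1} = Sx_n for n odd, starting from x_0 = Sx). If lim_{n→∞} p(x_n, x_{n+1}) = 0, then {x_n} is a p-Cauchy sequence (i.e. for every ε > 0 there exists N such that p(x_n, x_m) < ε for all m, n ≥ N). -/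
/-!
Suppose the sequence is not Cauchy, say with gap `ε`, and put `e = ε / 2`. Since consecutive
terms become arbitrarily close, the distance `p(x_m, x_n)` from an even index `n` grows along the
odd indices `m > n` in steps of size at most `2δ`, so for every `δ > 0` it crosses the level `e`
at some odd `m` with `e ≤ p(x_m, x_n) < e + 2δ`. As `x_m = T x_{m-1}` and `x_n = S x_{n-1}`, the
contraction yields `F e ≤ ψ (F t)` for values `t > e` arbitrarily close to `e`. But right
continuity of `F` at `e` and upper semicontinuity of `ψ` at `F e`, together with
`ψ (F e) < F e`, give `ψ (F t) < F e` for all `t > e` close to `e`.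
-/

open Set Filter Topology

/-- The quantity M(x,y) of the (F,ψ)-contraction condition. -/
noncomputable def Mfun {X : Type*} (p : X → X → ℝ) (T S : X → X) (x y : X) : ℝ :=
  max (max (p x y) (p (T x) x)) (max (p (S y) y) ((p (T x) y + p (S y) x) / 2))

/-- The pair (T,S) is an (F,ψ)-contraction. -/
def FpsiContraction {X : Type*} (p : X → X → ℝ) (T S : X → X) (F ψ : ℝ → ℝ) : Prop :=
  ∀ x y, F (p (T x) (S y)) ≤ ψ (F (Mfun p T S x y))

section Mfun

variable {X : Type*} {p : X → X → ℝ} {T S : X → X} {x y : X}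

theorem Mfun_le_add (hp : ∀ a b, 0 ≤ p a b) (hsymm : ∀ a b, p a b = p b a)
    (htri : ∀ a b c, p a c ≤ p a b + p b c) :
    Mfun p T S x y ≤ p (T x) (S y) + p (T x) x + p (S y) y := by
  have hxy := htri x (T x) y
  have hTy := htri (T x) (S y) y
  have hSx := htri (S y) (T x) x
  rw [hsymm x (T x)] at hxy
  rw [hsymm (S y) (T x)] at hSx
  have := hp (T x) (S y)
  have := hp (S y) y
  have := hp (T x) x
  unfold Mfun
  refine max_le (max_le ?_ ?_) (max_le ?_ ?_) <;> linarith

theorem le_three_mul_Mfun (hsymm : ∀ a b, p a b = p b a)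
    (htri : ∀ a b c, p a c ≤ p a b + p b c) :
    p (T x) (S y) ≤ 3 * Mfun p T S x y := by
  have hTxy := htri (T x) x (S y)
  have hxSy := htri x y (S y)
  have hxy : p x y ≤ Mfun p T S x y := le_max_of_le_left (le_max_left _ _)
  have hTx : p (T x) x ≤ Mfun p T S x y := le_max_of_le_left (le_max_right _ _)
  have hSy : p (S y) y ≤ Mfun p T S x y := le_max_of_le_right (le_max_left _ _)
  rw [hsymm y] at hxSy
  linarith

theorem FpsiContraction.le_psi_of_le {F ψ : ℝ → ℝ} (hcontr : FpsiContraction p T S F ψ)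
    (hp : ∀ a b, 0 ≤ p a b) (hsymm : ∀ a b, p a b = p b a)
    (htri : ∀ a b c, p a c ≤ p a b + p b c) (hFmono : MonotoneOn F (Ici 0))
    (hFpos : ∀ t ≥ (0:ℝ), t ≠ 0 → 0 < F t) (hψmono : MonotoneOn ψ (Ici 0))
    {e t : ℝ} (he : 0 < e) (he_le : e ≤ p (T x) (S y))
    (hle_t : p (T x) (S y) + p (T x) x + p (S y) y ≤ t) :
    F e ≤ ψ (F t) := by
  set M := Mfun p T S x y
  have h3M : p (T x) (S y) ≤ 3 * M := le_three_mul_Mfun hsymm htri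
  have hM : 0 < M := by linarith
  have hMt : M ≤ t := (Mfun_le_add hp hsymm htri).trans hle_t
  have hFM : 0 < F M := hFpos M hM.le hM.ne'
  have hFMt : F M ≤ F t := hFmono hM.le (hM.le.trans hMt) hMt
  calc F e ≤ F (p (T x) (S y)) := hFmono he.le (he.le.trans he_le) he_le
    _ ≤ ψ (F M) := hcontr x y
    _ ≤ ψ (F t) := hψmono hFM.le (hFM.le.trans hFMt) hFMt

end Mfun

theorem eventually_comp_lt_of_continuousWithinAt {F ψ : ℝ → ℝ} {e : ℝ}
    (hFrc : ContinuousWithinAt F (Ici e) e) (hF : ∀ t ≥ e, 0 ≤ F t)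
    (hψusc : UpperSemicontinuousWithinAt ψ (Ici 0) (F e)) (hψlt : ψ (F e) < F e) :
    ∀ᶠ t in 𝓝[≥] e, ψ (F t) < F e := by
  have hF_tendsto : Tendsto F (𝓝[≥] e) (𝓝[Ici 0] (F e)) :=
    tendsto_nhdsWithin_iff.mpr ⟨hFrc, eventually_nhdsWithin_of_forall hF⟩
  exact hF_tendsto.eventually (hψusc _ hψlt)

theorem exists_mem_Ico_of_succ_le_add {f : ℕ → ℝ} {e d : ℝ} (h0 : f 0 < e)
    (hstep : ∀ k, f (k + 1) ≤ f k + d) {K : ℕ} (hK : e ≤ f K) :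
    ∃ k, f k ∈ Ico e (e + d) := by
  induction K with
  | zero => exact absurd hK h0.not_ge
  | succ K ih =>
    by_cases hKe : e ≤ f K
    · exact ih hKe
    · exact ⟨K + 1, hK, by linarith [hstep K]⟩

section Sequence

variable {X : Type*} {p : X → X → ℝ} {u : ℕ → X} {N₀ : ℕ} {η : ℝ}

theorem lt_two_mul_of_le_of_le_add_two (hp : ∀ a b, 0 ≤ p a b) (hsymm : ∀ a b, p a b = p b a)
    (htri : ∀ a b c, p a c ≤ p a b + p b c) (hsucc : ∀ k ≥ N₀, p (u k) (u (k + 1)) < η)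
    {a c : ℕ} (ha : N₀ ≤ a) (hac : a ≤ c) (hca : c ≤ a + 2) :
    p (u a) (u c) < 2 * η := by
  have h₁ := hsucc a ha
  have h₂ := hsucc (a + 1) (by omega)
  obtain rfl | rfl | rfl : a = c ∨ c = a + 1 ∨ c = a + 2 := by omega
  · linarith [htri (u a) (u (a + 1)) (u a), hsymm (u (a + 1)) (u a)]
  · linarith [hp (u a) (u (a + 1))]
  · linarith [htri (u a) (u (a + 1)) (u (a + 2))]

theorem exists_even_odd_offset_far (hp : ∀ a b, 0 ≤ p a b) (hsymm : ∀ a b, p a b = p b a)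
    (htri : ∀ a b c, p a c ≤ p a b + p b c) (hsucc : ∀ k ≥ N₀, p (u k) (u (k + 1)) < η)
    {ε : ℝ} (hfar : ∀ N, ∃ m ≥ N, ∃ n ≥ N, ε ≤ p (u m) (u n)) (N : ℕ) :
    ∃ n k, N ≤ n ∧ Even n ∧ ε - 4 * η ≤ p (u (n + 2 * k + 1)) (u n) := by
  obtain ⟨a, ha, b, hb, hab⟩ := hfar (max N N₀)
  wlog hba : b ≤ a generalizing a b
  · exact this b hb a ha (by rwa [hsymm]) (by omega)
  -- `m` is the odd index among `a + 1, a + 2`, and `n` the even one among `b, b + 1`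
  set m := a + 1 + a % 2
  set n := b + b % 2
  refine ⟨n, (m - n - 1) / 2, by omega, Nat.even_iff.mpr (by omega), ?_⟩
  rw [show n + 2 * ((m - n - 1) / 2) + 1 = m by omega]
  have ham := lt_two_mul_of_le_of_le_add_two hp hsymm htri hsucc (a := a) (c := m)
    (by omega) (by omega) (by omega)
  have hbn := lt_two_mul_of_le_of_le_add_two hp hsymm htri hsucc (a := b) (c := n)
    (by omega) (by omega) (by omega)
  linarith [htri (u a) (u m) (u b), htri (u m) (u n) (u b), hsymm (u n) (u b)]

theorem exists_even_odd_near (hp : ∀ a b, 0 ≤ p a b) (hsymm : ∀ a b, p a b = p b a)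
    (htri : ∀ a b c, p a c ≤ p a b + p b c)
    (hlim : Tendsto (fun n => p (u n) (u (n + 1))) atTop (𝓝 0))
    {ε : ℝ} (hε : 0 < ε) (hfar : ∀ N, ∃ m ≥ N, ∃ n ≥ N, ε ≤ p (u m) (u n))
    {t : ℝ} (ht : ε / 2 < t) :
    ∃ i j, Even i ∧ Odd j ∧ ε / 2 ≤ p (u (i + 1)) (u (j + 1)) ∧
      p (u (i + 1)) (u (j + 1)) + p (u (i + 1)) (u i) + p (u (j + 1)) (u j) < t := by
  set η := min ((t - ε / 2) / 4) (ε / 8)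
  have hη_t : η ≤ (t - ε / 2) / 4 := min_le_left _ _
  have hη_ε : η ≤ ε / 8 := min_le_right _ _
  obtain ⟨N₀, hsucc⟩ : ∃ N₀, ∀ k ≥ N₀, p (u k) (u (k + 1)) < η :=
    eventually_atTop.mp (hlim.eventually (gt_mem_nhds (lt_min (by linarith) (by linarith))))
  obtain ⟨n, K, hn, hn_even, hK⟩ :=
    exists_even_odd_offset_far hp hsymm htri hsucc hfar (N₀ + 1)
  have h₀ : p (u (n + 2 * 0 + 1)) (u n) < ε / 2 := by
    rw [mul_zero, add_zero, hsymm]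
    linarith [hsucc n (by omega)]
  have hstep (k : ℕ) :
      p (u (n + 2 * (k + 1) + 1)) (u n) ≤ p (u (n + 2 * k + 1)) (u n) + 2 * η := by
    have := lt_two_mul_of_le_of_le_add_two hp hsymm htri hsucc
      (a := n + 2 * k + 1) (c := n + 2 * (k + 1) + 1) (by omega) (by omega) (by omega)
    linarith [htri (u (n + 2 * (k + 1) + 1)) (u (n + 2 * k + 1)) (u n),
      hsymm (u (n + 2 * (k + 1) + 1)) (u (n + 2 * k + 1))]
  obtain ⟨k, hk_ge, hk_lt⟩ :=
    exists_mem_Ico_of_succ_le_add (f := fun k => p (u (n + 2 * k + 1)) (u n)) h₀ hstep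
      (K := K) (by linarith)
  obtain ⟨j, rfl⟩ : ∃ j, n = j + 1 := ⟨n - 1, by omega⟩
  refine ⟨j + 1 + 2 * k, j, by simpa [parity_simps] using hn_even,
    by simpa [parity_simps] using hn_even, hk_ge, ?_⟩
  have hi := hsucc (j + 1 + 2 * k) (by omega)
  have hj := hsucc j (by omega)
  rw [hsymm] at hi hj
  linarith

end Sequence

theorem alternating_cauchy_general {X : Type*} (p : X → X → ℝ) (hp : ∀ a b, 0 ≤ p a b)
    (hsymm : ∀ a b, p a b = p b a)
    (htri : ∀ a b c, p a c ≤ p a b + p b c)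
    (T S : X → X) (F ψ : ℝ → ℝ)
    (hFmono : MonotoneOn F (Set.Ici 0))
    (hFrc : ∀ t ≥ (0:ℝ), ContinuousWithinAt F (Set.Ici t) t)
    (hFpos : ∀ t ≥ (0:ℝ), t ≠ 0 → 0 < F t)
    (hψmono : MonotoneOn ψ (Set.Ici 0))
    (hψusc : UpperSemicontinuousOn ψ (Set.Ici 0))
    (hψlt : ∀ t > (0:ℝ), ψ t < t)
    (hcontr : FpsiContraction p T S F ψ)
    (seq : ℕ → X)
    (hseq : ∀ n, seq (n + 1) = if n % 2 = 0 then T (seq n) else S (seq n))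
    (hlim : Filter.Tendsto (fun n => p (seq n) (seq (n + 1))) Filter.atTop (nhds 0)) :
    ∀ ε > (0:ℝ), ∃ N : ℕ, ∀ m ≥ N, ∀ n ≥ N, p (seq m) (seq n) < ε := by
  by_contra! hfar
  obtain ⟨ε, hε, hfar⟩ := hfar
  have he : 0 < ε / 2 := by positivity
  have hFe : 0 < F (ε / 2) := hFpos _ he.le he.ne'
  have hnear : ∀ᶠ t in 𝓝[≥] (ε / 2), ψ (F t) < F (ε / 2) :=
    eventually_comp_lt_of_continuousWithinAt (hFrc _ he.le)
      (fun t ht => (hFpos t (he.le.trans ht) (he.trans_le ht).ne').le)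
      (hψusc _ hFe.le) (hψlt _ hFe)
  obtain ⟨t, hψt, ht⟩ :=
    ((hnear.filter_mono (nhdsWithin_mono _ Ioi_subset_Ici_self)).and self_mem_nhdsWithin).exists
  obtain ⟨i, j, hi, hj, hlo, hhi⟩ := exists_even_odd_near hp hsymm htri hlim hε hfar ht
  rw [hseq i, if_pos (Nat.even_iff.mp hi)] at hlo hhi
  rw [hseq j, if_neg (by rw [Nat.odd_iff.mp hj]; decide)] at hlo hhi
  exact (hcontr.le_psi_of_le hp hsymm htri hFmono hFpos hψmono he hlo hhi.le).not_gt hψt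

theorem alternating_cauchy {X : Type*} (p : X → X → ℝ) (hp : ∀ a b, 0 ≤ p a b)
    (hsymm : ∀ a b, p a b = p b a)
    (htri : ∀ a b c, p a c ≤ p a b + p b c)
    (T S : X → X) (F ψ : ℝ → ℝ)
    (hFmono : MonotoneOn F (Set.Ici 0))
    (hFrc : ∀ t ≥ (0:ℝ), ContinuousWithinAt F (Set.Ici t) t)
    (hFpos : ∀ t ≥ (0:ℝ), t ≠ 0 → 0 < F t)
    (hψmono : MonotoneOn ψ (Set.Ici 0))
    (hψusc : UpperSemicontinuousOn ψ (Set.Ici 0))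
    (hψlt : ∀ t > (0:ℝ), ψ t < t) (hψ0 : ψ 0 = 0)
    (hcontr : FpsiContraction p T S F ψ)
    (x0 : X) (seq : ℕ → X)
    (hseq0 : seq 0 = S x0)
    (hseq : ∀ n, seq (n + 1) = if n % 2 = 0 then T (seq n) else S (seq n))
    (hlim : Filter.Tendsto (fun n => p (seq n) (seq (n + 1))) Filter.atTop (nhds 0)) :
    ∀ ε > (0:ℝ), ∃ N : ℕ, ∀ m ≥ N, ∀ n ≥ N, p (seq m) (seq n) < ε :=
  alternating_cauchy_general p hp hsymm htri T S F ψ hFmono hFrc hFpos hψmono hψusc hψlt hcontr seq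
    hseq hlim
end

section
/- Let ψ : [0,∞) → [0,∞) be nondecreasing, right upper semicontinuous, with ψ(t) < t for each t > 0. Then the iterates ψ_n = ψ∘⋯∘ψ (n times) satisfy: limsup_n ψ_n(ε) < ε for all ε > 0. -/
open Filter Set

/- Away from zero `ψ t < t`, and monotonicity forces `ψ 0 ≤ 0` as well, so `ψ` maps `[0, ∞)` into
itself and lies below the identity there. The orbit of `ε` is therefore nonincreasing and bounded
below by `0`; its limsup is its infimum, which is at most `ψ ε < ε`. -/

theorem map_zero_nonpos_of_monotoneOn {ψ : ℝ → ℝ} (hmono : MonotoneOn ψ (Ici 0))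
    (hlt : ∀ t > (0 : ℝ), ψ t < t) : ψ 0 ≤ 0 := by
  by_contra! h
  have : ψ 0 ≤ ψ (ψ 0) := hmono self_mem_Ici h.le h.le
  linarith [hlt _ h]

theorem map_le_self_of_monotoneOn {ψ : ℝ → ℝ} (hmono : MonotoneOn ψ (Ici 0))
    (hlt : ∀ t > (0 : ℝ), ψ t < t) : ∀ t ∈ Ici (0 : ℝ), ψ t ≤ t := by
  intro t ht
  rcases (mem_Ici.mp ht).eq_or_lt with rfl | hpos
  · exact map_zero_nonpos_of_monotoneOn hmono hlt
  · exact (hlt t hpos).le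

theorem antitone_iterate_of_mapsTo_of_map_le {α : Type*} [Preorder α] {f : α → α} {s : Set α}
    (hs : MapsTo f s s) (hle : ∀ x ∈ s, f x ≤ x) {x : α} (hx : x ∈ s) :
    Antitone fun n => f^[n] x :=
  antitone_nat_of_succ_le fun n => by
    rw [Function.iterate_succ_apply']
    exact hle _ (hs.iterate n hx)

theorem limsup_le_of_antitone {u : ℕ → ℝ} (hanti : Antitone u) (hbdd : BddBelow (range u))
    (n : ℕ) : limsup u atTop ≤ u n := by
  rw [(tendsto_atTop_ciInf hanti hbdd).limsup_eq]
  exact ciInf_le hbdd n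

theorem iterates_limsup_lt_general (ψ : ℝ → ℝ)
    (hψmono : MonotoneOn ψ (Set.Ici 0))
    (hψnonneg : ∀ t ≥ (0:ℝ), 0 ≤ ψ t)
    (hψlt : ∀ t > (0:ℝ), ψ t < t) :
    ∀ ε > (0:ℝ), Filter.limsup (fun n => ψ^[n] ε) Filter.atTop < ε := by
  intro ε hε
  have hmaps : MapsTo ψ (Ici 0) (Ici 0) := hψnonneg
  have hanti : Antitone fun n => ψ^[n] ε :=
    antitone_iterate_of_mapsTo_of_map_le hmaps (map_le_self_of_monotoneOn hψmono hψlt) hε.le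
  have hbdd : BddBelow (range fun n => ψ^[n] ε) :=
    ⟨0, forall_mem_range.2 fun n => hmaps.iterate n hε.le⟩
  calc limsup (fun n => ψ^[n] ε) atTop ≤ ψ^[1] ε := limsup_le_of_antitone hanti hbdd 1
    _ < ε := hψlt ε hε

theorem iterates_limsup_lt (ψ : ℝ → ℝ)
    (hψmono : MonotoneOn ψ (Set.Ici 0))
    (hψnonneg : ∀ t ≥ (0:ℝ), 0 ≤ ψ t)
    (hψrusc : ∀ t ≥ (0:ℝ), ∀ ε > (0:ℝ), ∃ δ > (0:ℝ), ∀ s, t ≤ s → s < t + δ → ψ s < ψ t + ε)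
    (hψlt : ∀ t > (0:ℝ), ψ t < t) :
    ∀ ε > (0:ℝ), Filter.limsup (fun n => ψ^[n] ε) Filter.atTop < ε :=
  iterates_limsup_lt_general ψ hψmono hψnonneg hψlt
end

section
/- Let ψ : [0,∞) → [0,∞) be nondecreasing, right upper semicontinuous, with ψ(t) < t for each t > 0. Then for each ε > 0 there exists δ > 0 such that for each t ∈ [ε, ε+δ] there exists ν ∈ ℕ with ψ_ν(t) < ε. -/
open Set

theorem iterates_C7_general (ψ : ℝ → ℝ)
    (hψrusc : ∀ t ≥ (0:ℝ), ∀ ε > (0:ℝ), ∃ δ > (0:ℝ), ∀ s, t ≤ s → s < t + δ → ψ s < ψ t + ε)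
    (hψlt : ∀ t > (0:ℝ), ψ t < t) :
    ∀ ε > (0:ℝ), ∃ δ > (0:ℝ), ∀ t, ε ≤ t → t ≤ ε + δ → ∃ ν : ℕ, ψ^[ν] t < ε := by
  intro ε hε
  -- One iterate suffices: right upper semicontinuity at ε with margin ε - ψ ε > 0.
  obtain ⟨δ, hδ, hψ_near⟩ := hψrusc ε hε.le (ε - ψ ε) (sub_pos.mpr (hψlt ε hε))
  refine ⟨δ / 2, half_pos hδ, fun t hεt htε => ⟨1, ?_⟩⟩
  have hψt := hψ_near t hεt (by linarith)
  rw [Function.iterate_one]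
  linarith

theorem iterates_C7 (ψ : ℝ → ℝ)
    (hψmono : MonotoneOn ψ (Set.Ici 0))
    (hψnonneg : ∀ t ≥ (0:ℝ), 0 ≤ ψ t)
    (hψrusc : ∀ t ≥ (0:ℝ), ∀ ε > (0:ℝ), ∃ δ > (0:ℝ), ∀ s, t ≤ s → s < t + δ → ψ s < ψ t + ε)
    (hψlt : ∀ t > (0:ℝ), ψ t < t) :
    ∀ ε > (0:ℝ), ∃ δ > (0:ℝ), ∀ t, ε ≤ t → t ≤ ε + δ → ∃ ν : ℕ, ψ^[ν] t < ε :=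
  iterates_C7_general ψ hψrusc hψlt
end
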